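/- arXiv:2201.05317 — 4 statements merged into one kernel-verified Lean document; each statement's English description precedes it below -/
import Mathlib

section
/- Let 1 ≤ ℓ < k and suppose the Toeplitz graph T_n⟨t_1, …, t_k⟩ is claw-free and n > t_k + t_ℓ. Then t_i = i·t_1 for every i with 1 ≤ i ≤ ℓ. -/
/-- The Toeplitz graph `T_n⟨t 1, …, t k⟩` on vertex set `Fin n`:
distinct vertices `x, y` are adjacent iff `|x − y| = t i` for some `1 ≤ i ≤ k`. -/
def toeplitzGraph (n k : ℕ) (t : ℕ → ℕ) : SimpleGraph (Fin n) where
  Adj x y := x ≠ y ∧ ∃ i, 1 ≤ i ∧ i ≤ k ∧ ((x : ℤ) - (y : ℤ)).natAbs = t i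
  symm := ⟨by
    rintro x y ⟨hxy, i, h1, h2, h3⟩
    exact ⟨hxy.symm, i, h1, h2, by omega⟩⟩
  loopless := ⟨by rintro x ⟨hx, -⟩; exact hx rfl⟩

/-- A graph has a claw if it contains an induced `K_{1,3}`:
a center `a` adjacent to three pairwise distinct, pairwise nonadjacent leaves `b, c, d`. -/
def HasClaw {V : Type*} (G : SimpleGraph V) : Prop :=
  ∃ a b c d : V, G.Adj a b ∧ G.Adj a c ∧ G.Adj a d ∧
    b ≠ c ∧ b ≠ d ∧ c ≠ d ∧ ¬ G.Adj b c ∧ ¬ G.Adj b d ∧ ¬ G.Adj c d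

/-- A graph is claw-free if it has no claw. -/
def ClawFree {V : Type*} (G : SimpleGraph V) : Prop := ¬ HasClaw G

/-- If `T_n⟨t 1, …, t k⟩` is claw-free and `n > t k + t ℓ` for some
`1 ≤ ℓ < k`, then `t i = i * t 1` for all `1 ≤ i ≤ ℓ`. -/
theorem stmt_1 (n k ℓ : ℕ) (t : ℕ → ℕ)
    (hℓ : 1 ≤ ℓ) (hℓk : ℓ < k)
    (hpos : 0 < t 1) (hmono : StrictMonoOn t (Set.Icc 1 k)) (htn : t k < n)
    (hcf : ClawFree (toeplitzGraph n k t))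
    (hn : t k + t ℓ < n) :
    ∀ i, 1 ≤ i → i ≤ ℓ → t i = i * t 1 := by
  have hle : ∀ p q, 1 ≤ p → p ≤ q → q ≤ k → t p ≤ t q := by
    intro p q hp hpq hq
    rcases eq_or_lt_of_le hpq with h | h
    · exact le_of_eq (by rw [h])
    · exact le_of_lt (hmono ⟨hp, by omega⟩ ⟨by omega, hq⟩ h)
  intro i
  induction i using Nat.strong_induction_on with
  | _ i IH =>
    intro h1 hiℓ
    rcases eq_or_lt_of_le h1 with h | h2
    · rw [← h]; simp
    · -- 2 ≤ i
      have hik : i ≤ k := by omega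
      have htiℓ : t i ≤ t ℓ := hle i ℓ h1 hiℓ (by omega)
      have ht1ℓ : t 1 ≤ t ℓ := hle 1 ℓ le_rfl hℓ (by omega)
      have ht1k : t 1 ≤ t k := hle 1 k le_rfl (by omega) le_rfl
      have htik : t i ≤ t k := hle i k h1 hik le_rfl
      have ht1i : t 1 < t i := hmono ⟨le_rfl, by omega⟩ ⟨h1, hik⟩ h2
      set a : Fin n := ⟨t k, by omega⟩ with ha
      set b : Fin n := ⟨t k + t 1, by omega⟩ with hb
      set c : Fin n := ⟨t k + t i, by omega⟩ with hc
      set d : Fin n := ⟨0, by omega⟩ with hd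
      have hm : ∃ m, 1 ≤ m ∧ m ≤ k ∧ t m = t i - t 1 := by
        by_contra hno
        push_neg at hno
        apply hcf
        refine ⟨a, b, c, d, ?_, ?_, ?_, ?_, ?_, ?_, ?_, ?_, ?_⟩
        · exact ⟨by simp [ha, hb, Fin.ext_iff]; omega, 1, le_rfl, by omega,
            by simp [ha, hb]; try omega⟩
        · exact ⟨by simp [ha, hc, Fin.ext_iff]; omega, i, h1, hik,
            by simp [ha, hc]; try omega⟩
        · exact ⟨by simp [ha, hd, Fin.ext_iff]; omega, k, by omega, le_rfl,
            by simp [ha, hd]⟩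
        · simp [hb, hc, Fin.ext_iff]; omega
        · simp [hb, hd, Fin.ext_iff]; omega
        · simp [hc, hd, Fin.ext_iff]; omega
        · rintro ⟨-, m, hm1, hm2, hm3⟩
          simp [hb, hc] at hm3
          exact absurd (by omega : t m = t i - t 1) (hno m hm1 hm2)
        · rintro ⟨-, m, hm1, hm2, hm3⟩
          have := hle m k hm1 hm2 le_rfl
          simp [hb, hd] at hm3
          omega
        · rintro ⟨-, m, hm1, hm2, hm3⟩
          have := hle m k hm1 hm2 le_rfl
          simp [hc, hd] at hm3
          omega
      obtain ⟨m, hm1, hm2, hm3⟩ := hm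
      have htm : t m < t i := by omega
      have hmi : m < i := by
        by_contra hmi
        have := hle i m h1 (by omega) hm2
        omega
      have hIHm : t m = m * t 1 := IH m hmi hm1 (by omega)
      have hIH1 : t (i - 1) = (i - 1) * t 1 := IH (i - 1) (by omega) (by omega) (by omega)
      have hlt : t (i - 1) < t i := hmono ⟨by omega, by omega⟩ ⟨h1, hik⟩ (by omega)
      -- (i-1) * t 1 < t i = (m+1) * t 1 ⇒ i - 1 ≤ m, and m < i ⇒ m = i - 1
      have hkey : (i - 1) * t 1 < (m + 1) * t 1 := by
        rw [← hIH1]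
        calc t (i - 1) < t i := hlt
        _ = (m + 1) * t 1 := by rw [add_mul, one_mul, ← hIHm]; omega
      have : i - 1 < m + 1 := Nat.lt_of_mul_lt_mul_right hkey
      have hmeq : m = i - 1 := by omega
      rw [hmeq] at hIHm hm3
      have hfin : t i = (i - 1) * t 1 + t 1 := by omega
      rw [hfin]
      cases i with
      | zero => omega
      | succ j => simp only [Nat.succ_sub_one]; ring
end

section
/- Every cocoonery is claw-free: for all positive integers n, k, t with k ≥ 2 and n > kt, the Toeplitz graph T_n⟨t, 2t, …, kt⟩ contains no claw. -/
lemma key (n k t : ℕ) (b c : Fin n) (i j : ℕ)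
    (hi : 1 ≤ i) (hik : i ≤ k) (hj : 1 ≤ j) (hjk : j ≤ k)
    (hbc : b ≠ c)
    (h : (b : ℤ) - (c : ℤ) = (i : ℤ) * t - (j : ℤ) * t) :
    (toeplitzGraph n k (fun i => i * t)).Adj b c := by
  have hbc' : (b : ℤ) ≠ (c : ℤ) := by
    intro hh
    exact hbc (Fin.ext (by exact_mod_cast hh))
  rcases lt_trichotomy i j with hlt | heq | hgt
  · refine ⟨hbc, j - i, by omega, by omega, ?_⟩
    have e : (b : ℤ) - (c : ℤ) = -((((j - i) * t : ℕ) : ℤ)) := by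
      rw [h]; push_cast [Nat.cast_sub hlt.le]; ring
    simp only [e, Int.natAbs_neg, Int.natAbs_natCast]
  · exfalso; apply hbc'; subst heq; omega
  · refine ⟨hbc, i - j, by omega, by omega, ?_⟩
    have e : (b : ℤ) - (c : ℤ) = (((i - j) * t : ℕ) : ℤ) := by
      rw [h]; push_cast [Nat.cast_sub hgt.le]; ring
    simp only [e, Int.natAbs_natCast]

/-- Every cocoonery is claw-free: for `k ≥ 2`, `t ≥ 1` and `n > k * t`,
the Toeplitz graph `T_n⟨t, 2t, …, kt⟩` contains no claw. -/
theorem stmt_3 (n k t : ℕ) (hk : 2 ≤ k) (ht : 0 < t) (hn : k * t < n) :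
    ClawFree (toeplitzGraph n k (fun i => i * t)) := by
  rintro ⟨a, b, c, d, ⟨-, i, hi1, hi2, hi3⟩, ⟨-, j, hj1, hj2, hj3⟩, ⟨-, l, hl1, hl2, hl3⟩,
    hbc, hbd, hcd, nbc, nbd, ncd⟩
  simp only at hi3 hj3 hl3
  have hb : (b : ℤ) - (a : ℤ) = (i : ℤ) * t ∨ (b : ℤ) - (a : ℤ) = -((i : ℤ) * t) := by omega
  have hc : (c : ℤ) - (a : ℤ) = (j : ℤ) * t ∨ (c : ℤ) - (a : ℤ) = -((j : ℤ) * t) := by omega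
  have hd : (d : ℤ) - (a : ℤ) = (l : ℤ) * t ∨ (d : ℤ) - (a : ℤ) = -((l : ℤ) * t) := by omega
  rcases hb with hb | hb <;> rcases hc with hc | hc <;> rcases hd with hd | hd
  · exact nbc (key n k t b c i j hi1 hi2 hj1 hj2 hbc (by omega))
  · exact nbc (key n k t b c i j hi1 hi2 hj1 hj2 hbc (by omega))
  · exact nbd (key n k t b d i l hi1 hi2 hl1 hl2 hbd (by omega))
  · exact ncd (key n k t c d l j hl1 hl2 hj1 hj2 hcd (by omega))
  · exact ncd (key n k t c d j l hj1 hj2 hl1 hl2 hcd (by omega))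
  · exact nbd (key n k t b d l i hl1 hl2 hi1 hi2 hbd (by omega))
  · exact nbc (key n k t b c j i hj1 hj2 hi1 hi2 hbc (by omega))
  · exact nbc (key n k t b c j i hj1 hj2 hi1 hi2 hbc (by omega))
end

section
/- Let t_1 < t_2 < t_3 be positive integers. The Toeplitz graph T_{t_3+1}⟨t_1, t_2, t_3⟩ is claw-free if and only if t_1 + t_2 = t_3 or t_2 = 2t_1 or t_3 = 2t_1. -/
lemma toeplitz_adj_iff (n : ℕ) (t : ℕ → ℕ) (x y : Fin n) :
    (toeplitzGraph n 3 t).Adj x y ↔ x.val ≠ y.val ∧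
      (((x : ℤ) - (y : ℤ)).natAbs = t 1 ∨ ((x : ℤ) - (y : ℤ)).natAbs = t 2 ∨
        ((x : ℤ) - (y : ℤ)).natAbs = t 3) := by
  constructor
  · rintro ⟨hne, i, h1, h2, h3⟩
    refine ⟨fun h => hne (Fin.ext h), ?_⟩
    interval_cases i <;> tauto
  · rintro ⟨hne, h | h | h⟩
    · exact ⟨fun h' => hne (congrArg Fin.val h'), 1, by omega, by omega, h⟩
    · exact ⟨fun h' => hne (congrArg Fin.val h'), 2, by omega, by omega, h⟩
    · exact ⟨fun h' => hne (congrArg Fin.val h'), 3, by omega, by omega, h⟩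

lemma toeplitz_conv1 (x y t1 t2 t3 : ℕ)
    (h : ((x:ℤ) - (y:ℤ)).natAbs = t1 ∨ ((x:ℤ) - (y:ℤ)).natAbs = t2 ∨
      ((x:ℤ) - (y:ℤ)).natAbs = t3) :
    x + t1 = y ∨ y + t1 = x ∨ x + t2 = y ∨ y + t2 = x ∨ x + t3 = y ∨ y + t3 = x := by omega

lemma toeplitz_conv2 (x y t1 t2 t3 : ℕ)
    (h : ¬((x:ℤ) - (y:ℤ)).natAbs = t1 ∧ ¬((x:ℤ) - (y:ℤ)).natAbs = t2 ∧
      ¬((x:ℤ) - (y:ℤ)).natAbs = t3) :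
    x + t1 ≠ y ∧ y + t1 ≠ x ∧ x + t2 ≠ y ∧ y + t2 ≠ x ∧ x + t3 ≠ y ∧ y + t3 ≠ x := by omega

set_option maxHeartbeats 4000000 in
lemma toeplitz_key (t1 t2 t3 a b c d : ℕ)
    (hpos : 0 < t1) (h12 : t1 < t2) (h23 : t2 < t3)
    (hcond : t1 + t2 = t3 ∨ t2 = 2 * t1 ∨ t3 = 2 * t1)
    (hbc0 : b ≠ c) (hbd0 : b ≠ d) (hcd0 : c ≠ d)
    (ha : a ≤ t3) (hb : b ≤ t3) (hc : c ≤ t3) (hd : d ≤ t3)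
    (hab : a + t1 = b ∨ b + t1 = a ∨ a + t2 = b ∨ b + t2 = a ∨ a + t3 = b ∨ b + t3 = a)
    (hac : a + t1 = c ∨ c + t1 = a ∨ a + t2 = c ∨ c + t2 = a ∨ a + t3 = c ∨ c + t3 = a)
    (had : a + t1 = d ∨ d + t1 = a ∨ a + t2 = d ∨ d + t2 = a ∨ a + t3 = d ∨ d + t3 = a)
    (nbc : b + t1 ≠ c ∧ c + t1 ≠ b ∧ b + t2 ≠ c ∧ c + t2 ≠ b ∧ b + t3 ≠ c ∧ c + t3 ≠ b)
    (nbd : b + t1 ≠ d ∧ d + t1 ≠ b ∧ b + t2 ≠ d ∧ d + t2 ≠ b ∧ b + t3 ≠ d ∧ d + t3 ≠ b)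
    (ncd : c + t1 ≠ d ∧ d + t1 ≠ c ∧ c + t2 ≠ d ∧ d + t2 ≠ c ∧ c + t3 ≠ d ∧ d + t3 ≠ c) :
    False := by
  omega

set_option maxHeartbeats 1000000 in
/-- `T_{t 3 + 1}⟨t 1, t 2, t 3⟩` is claw-free iff `t 1 + t 2 = t 3`
or `t 2 = 2 * t 1` or `t 3 = 2 * t 1`. -/
theorem stmt_12 (t : ℕ → ℕ)
    (hpos : 0 < t 1) (h12 : t 1 < t 2) (h23 : t 2 < t 3) :
    ClawFree (toeplitzGraph (t 3 + 1) 3 t) ↔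
      t 1 + t 2 = t 3 ∨ t 2 = 2 * t 1 ∨ t 3 = 2 * t 1 := by
  constructor
  · -- claw-free → condition; contrapositive: construct a claw
    intro hcf
    by_contra hcond
    push_neg at hcond
    obtain ⟨hc1, hc2, hc3⟩ := hcond
    apply hcf
    by_cases h22 : t 3 = 2 * t 2
    · -- claw: center t2, leaves 0, t2 - t1, t2 + t1
      refine ⟨⟨t 2, by omega⟩, ⟨0, by omega⟩, ⟨t 2 - t 1, by omega⟩, ⟨t 2 + t 1, by omega⟩,
        ?_, ?_, ?_, ?_, ?_, ?_, ?_, ?_, ?_⟩ <;>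
        simp only [toeplitz_adj_iff, Fin.val_mk, ne_eq, Fin.mk.injEq, not_and, not_or] <;>
        push_cast <;> omega
    · -- claw: center 0, leaves t1, t2, t3
      refine ⟨⟨0, by omega⟩, ⟨t 1, by omega⟩, ⟨t 2, by omega⟩, ⟨t 3, by omega⟩,
        ?_, ?_, ?_, ?_, ?_, ?_, ?_, ?_, ?_⟩ <;>
        simp only [toeplitz_adj_iff, Fin.val_mk, ne_eq, Fin.mk.injEq, not_and, not_or] <;>
        push_cast <;> omega
  · rintro hcond ⟨a, b, c, d, hab, hac, had, hbc, hbd, hcd, nbc, nbd, ncd⟩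
    rw [toeplitz_adj_iff] at hab hac had nbc nbd ncd
    have hbc' : b.val ≠ c.val := fun h => hbc (Fin.ext h)
    have hbd' : b.val ≠ d.val := fun h => hbd (Fin.ext h)
    have hcd' : c.val ≠ d.val := fun h => hcd (Fin.ext h)
    simp only [hbc', hbd', hcd', ne_eq, not_false_iff, true_and, not_and, not_or] at nbc nbd ncd
    obtain ⟨-, hab⟩ := hab
    obtain ⟨-, hac⟩ := hac
    obtain ⟨-, had⟩ := had
    have ha : a.val < t 3 + 1 := a.isLt
    have hb : b.val < t 3 + 1 := b.isLt
    have hc : c.val < t 3 + 1 := c.isLt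
    have hd : d.val < t 3 + 1 := d.isLt
    exact toeplitz_key (t 1) (t 2) (t 3) a.val b.val c.val d.val hpos h12 h23 hcond
      hbc' hbd' hcd' (by omega) (by omega) (by omega) (by omega)
      (toeplitz_conv1 _ _ _ _ _ hab) (toeplitz_conv1 _ _ _ _ _ hac)
      (toeplitz_conv1 _ _ _ _ _ had) (toeplitz_conv2 _ _ _ _ _ nbc)
      (toeplitz_conv2 _ _ _ _ _ nbd) (toeplitz_conv2 _ _ _ _ _ ncd)
end

section
/- Let G = T_n⟨t_1, t_2, t_3⟩ be a Toeplitz graph (so n > t_3) which is not a cocoonery, i.e., it is not the case that t_2 = 2t_1 and t_3 = 3t_1. Then G is claw-free if and only if n ≤ t_2 + t_3 and one of the following holds: (i) t_1 + t_2 = t_3; (ii) t_2 = 2t_1 and either t_3 = 4t_1 or n ≤ t_1 + t_3; (iii) t_3 = 2t_1 and n ≤ min{2t_2, 3t_1}. -/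
lemma tAdj {n : ℕ} {t : ℕ → ℕ} {x y : Fin n} :
    (toeplitzGraph n 3 t).Adj x y ↔
      x ≠ y ∧ (((x:ℤ) - (y:ℤ)).natAbs = t 1 ∨ ((x:ℤ) - (y:ℤ)).natAbs = t 2 ∨
        ((x:ℤ) - (y:ℤ)).natAbs = t 3) := by
  constructor
  · rintro ⟨hxy, i, h1, h2, h3⟩
    refine ⟨hxy, ?_⟩
    interval_cases i <;> tauto
  · rintro ⟨hxy, h | h | h⟩
    exacts [⟨hxy, 1, by omega, by omega, h⟩, ⟨hxy, 2, by omega, by omega, h⟩,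
      ⟨hxy, 3, by omega, by omega, h⟩]

lemma natAbs_comm' (x y : ℤ) : (x - y).natAbs = (y - x).natAbs := by omega

set_option maxHeartbeats 1000000 in
lemma claw_iff (n : ℕ) (t : ℕ → ℕ) :
    HasClaw (toeplitzGraph n 3 t) ↔
      ∃ a s1 s2 s3 : ℤ,
        0 ≤ a ∧ a < n ∧ 0 ≤ a + s1 ∧ a + s1 < n ∧ 0 ≤ a + s2 ∧ a + s2 < n ∧
        0 ≤ a + s3 ∧ a + s3 < n ∧
        s1 ≠ 0 ∧ s2 ≠ 0 ∧ s3 ≠ 0 ∧ s1 ≠ s2 ∧ s1 ≠ s3 ∧ s2 ≠ s3 ∧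
        (s1.natAbs = t 1 ∨ s1.natAbs = t 2 ∨ s1.natAbs = t 3) ∧
        (s2.natAbs = t 1 ∨ s2.natAbs = t 2 ∨ s2.natAbs = t 3) ∧
        (s3.natAbs = t 1 ∨ s3.natAbs = t 2 ∨ s3.natAbs = t 3) ∧
        ¬((s1 - s2).natAbs = t 1 ∨ (s1 - s2).natAbs = t 2 ∨ (s1 - s2).natAbs = t 3) ∧
        ¬((s1 - s3).natAbs = t 1 ∨ (s1 - s3).natAbs = t 2 ∨ (s1 - s3).natAbs = t 3) ∧
        ¬((s2 - s3).natAbs = t 1 ∨ (s2 - s3).natAbs = t 2 ∨ (s2 - s3).natAbs = t 3) := by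
  constructor
  · rintro ⟨a, b, c, d, hab, hac, had, hbc, hbd, hcd, nbc, nbd, ncd⟩
    rw [tAdj] at hab hac had
    obtain ⟨hab1, hab2⟩ := hab
    obtain ⟨hac1, hac2⟩ := hac
    obtain ⟨had1, had2⟩ := had
    have nbc' : ¬(((b:ℤ) - c).natAbs = t 1 ∨ ((b:ℤ) - c).natAbs = t 2 ∨
        ((b:ℤ) - c).natAbs = t 3) := fun h => nbc (tAdj.mpr ⟨hbc, h⟩)
    have nbd' : ¬(((b:ℤ) - d).natAbs = t 1 ∨ ((b:ℤ) - d).natAbs = t 2 ∨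
        ((b:ℤ) - d).natAbs = t 3) := fun h => nbd (tAdj.mpr ⟨hbd, h⟩)
    have ncd' : ¬(((c:ℤ) - d).natAbs = t 1 ∨ ((c:ℤ) - d).natAbs = t 2 ∨
        ((c:ℤ) - d).natAbs = t 3) := fun h => ncd (tAdj.mpr ⟨hcd, h⟩)
    have vab : (a:ℕ) ≠ (b:ℕ) := fun h => hab1 (Fin.ext h)
    have vac : (a:ℕ) ≠ (c:ℕ) := fun h => hac1 (Fin.ext h)
    have vad : (a:ℕ) ≠ (d:ℕ) := fun h => had1 (Fin.ext h)
    have vbc : (b:ℕ) ≠ (c:ℕ) := fun h => hbc (Fin.ext h)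
    have vbd : (b:ℕ) ≠ (d:ℕ) := fun h => hbd (Fin.ext h)
    have vcd : (c:ℕ) ≠ (d:ℕ) := fun h => hcd (Fin.ext h)
    have la := a.isLt; have lb := b.isLt; have lc := c.isLt; have ld := d.isLt
    clear hab1 hac1 had1 hbc hbd hcd nbc nbd ncd
    refine ⟨(a:ℤ), (b:ℤ) - a, (c:ℤ) - a, (d:ℤ) - a, ?_, ?_, ?_, ?_, ?_, ?_, ?_, ?_,
      ?_, ?_, ?_, ?_, ?_, ?_, ?_, ?_, ?_, ?_, ?_, ?_⟩
    · clear hab2 hac2 had2 nbc' nbd' ncd'; omega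
    · clear hab2 hac2 had2 nbc' nbd' ncd'; omega
    · clear hab2 hac2 had2 nbc' nbd' ncd'; omega
    · clear hab2 hac2 had2 nbc' nbd' ncd'; omega
    · clear hab2 hac2 had2 nbc' nbd' ncd'; omega
    · clear hab2 hac2 had2 nbc' nbd' ncd'; omega
    · clear hab2 hac2 had2 nbc' nbd' ncd'; omega
    · clear hab2 hac2 had2 nbc' nbd' ncd'; omega
    · clear hab2 hac2 had2 nbc' nbd' ncd'; omega
    · clear hab2 hac2 had2 nbc' nbd' ncd'; omega
    · clear hab2 hac2 had2 nbc' nbd' ncd'; omega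
    · clear hab2 hac2 had2 nbc' nbd' ncd'; omega
    · clear hab2 hac2 had2 nbc' nbd' ncd'; omega
    · clear hab2 hac2 had2 nbc' nbd' ncd'; omega
    · rw [natAbs_comm' ((a:ℤ)) ((b:ℤ))] at hab2; exact hab2
    · rw [natAbs_comm' ((a:ℤ)) ((c:ℤ))] at hac2; exact hac2
    · rw [natAbs_comm' ((a:ℤ)) ((d:ℤ))] at had2; exact had2
    · have e : ((b:ℤ) - a) - ((c:ℤ) - a) = (b:ℤ) - c := by ring
      rw [e]; exact nbc'
    · have e : ((b:ℤ) - a) - ((d:ℤ) - a) = (b:ℤ) - d := by ring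
      rw [e]; exact nbd'
    · have e : ((c:ℤ) - a) - ((d:ℤ) - a) = (c:ℤ) - d := by ring
      rw [e]; exact ncd'
  · rintro ⟨a, s1, s2, s3, h1, h2, h3, h4, h5, h6, h7, h8, nz1, nz2, nz3,
      ne12, ne13, ne23, m1, m2, m3, i12, i13, i23⟩
    have pa : a.toNat < n := by omega
    have pb : (a + s1).toNat < n := by omega
    have pc : (a + s2).toNat < n := by omega
    have pd : (a + s3).toNat < n := by omega
    refine ⟨⟨a.toNat, pa⟩, ⟨(a + s1).toNat, pb⟩, ⟨(a + s2).toNat, pc⟩, ⟨(a + s3).toNat, pd⟩,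
      ?_, ?_, ?_, ?_, ?_, ?_, ?_, ?_, ?_⟩
    case _ =>
      simp only [tAdj, ne_eq, Fin.mk.injEq, Fin.val_mk, not_and, not_or]
      clear i12 i13 i23 m2 m3 ne12 ne13 ne23 nz2 nz3; omega
    case _ =>
      simp only [tAdj, ne_eq, Fin.mk.injEq, Fin.val_mk, not_and, not_or]
      clear i12 i13 i23 m1 m3 ne12 ne13 ne23 nz1 nz3; omega
    case _ =>
      simp only [tAdj, ne_eq, Fin.mk.injEq, Fin.val_mk, not_and, not_or]
      clear i12 i13 i23 m1 m2 ne12 ne13 ne23 nz1 nz2; omega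
    case _ =>
      simp only [ne_eq, Fin.mk.injEq]
      clear i12 i13 i23 m1 m2 m3 ne13 ne23 nz3; omega
    case _ =>
      simp only [ne_eq, Fin.mk.injEq]
      clear i12 i13 i23 m1 m2 m3 ne12 ne23 nz2; omega
    case _ =>
      simp only [ne_eq, Fin.mk.injEq]
      clear i12 i13 i23 m1 m2 m3 ne12 ne13 nz1; omega
    case _ =>
      simp only [tAdj, ne_eq, Fin.mk.injEq, Fin.val_mk, not_and, not_or]
      clear i13 i23 m1 m2 m3 ne13 ne23 nz1 nz2 nz3; omega
    case _ =>
      simp only [tAdj, ne_eq, Fin.mk.injEq, Fin.val_mk, not_and, not_or]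
      clear i12 i23 m1 m2 m3 ne12 ne23 nz1 nz2 nz3; omega
    case _ =>
      simp only [tAdj, ne_eq, Fin.mk.injEq, Fin.val_mk, not_and, not_or]
      clear i12 i13 m1 m2 m3 ne12 ne13 nz1 nz2 nz3; omega

set_option maxHeartbeats 4000000 in
lemma arith_fwd (n : ℕ) (t : ℕ → ℕ)
    (hpos : 0 < t 1) (h12 : t 1 < t 2) (h23 : t 2 < t 3) (h3n : t 3 < n)
    (a s1 s2 s3 : ℤ)
    (h1 : 0 ≤ a) (h2 : a < n) (h3 : 0 ≤ a + s1) (h4 : a + s1 < n)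
    (h5 : 0 ≤ a + s2) (h6 : a + s2 < n) (h7 : 0 ≤ a + s3) (h8 : a + s3 < n)
    (nz1 : s1 ≠ 0) (nz2 : s2 ≠ 0) (nz3 : s3 ≠ 0)
    (ne12 : s1 ≠ s2) (ne13 : s1 ≠ s3) (ne23 : s2 ≠ s3)
    (m1 : s1.natAbs = t 1 ∨ s1.natAbs = t 2 ∨ s1.natAbs = t 3)
    (m2 : s2.natAbs = t 1 ∨ s2.natAbs = t 2 ∨ s2.natAbs = t 3)
    (m3 : s3.natAbs = t 1 ∨ s3.natAbs = t 2 ∨ s3.natAbs = t 3)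
    (i12 : ¬((s1 - s2).natAbs = t 1 ∨ (s1 - s2).natAbs = t 2 ∨ (s1 - s2).natAbs = t 3))
    (i13 : ¬((s1 - s3).natAbs = t 1 ∨ (s1 - s3).natAbs = t 2 ∨ (s1 - s3).natAbs = t 3))
    (i23 : ¬((s2 - s3).natAbs = t 1 ∨ (s2 - s3).natAbs = t 2 ∨ (s2 - s3).natAbs = t 3))
    (hR : n ≤ t 2 + t 3 ∧
        (t 1 + t 2 = t 3 ∨
         (t 2 = 2 * t 1 ∧ (t 3 = 4 * t 1 ∨ n ≤ t 1 + t 3)) ∨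
         (t 3 = 2 * t 1 ∧ n ≤ min (2 * t 2) (3 * t 1)))) : False := by
  have e1 : s1 = (t 1 : ℤ) ∨ s1 = -(t 1 : ℤ) ∨ s1 = (t 2 : ℤ) ∨ s1 = -(t 2 : ℤ) ∨
      s1 = (t 3 : ℤ) ∨ s1 = -(t 3 : ℤ) := by
    clear i12 i13 i23 m2 m3 hR; omega
  have e2 : s2 = (t 1 : ℤ) ∨ s2 = -(t 1 : ℤ) ∨ s2 = (t 2 : ℤ) ∨ s2 = -(t 2 : ℤ) ∨
      s2 = (t 3 : ℤ) ∨ s2 = -(t 3 : ℤ) := by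
    clear i12 i13 i23 m1 m3 hR; omega
  have e3 : s3 = (t 1 : ℤ) ∨ s3 = -(t 1 : ℤ) ∨ s3 = (t 2 : ℤ) ∨ s3 = -(t 2 : ℤ) ∨
      s3 = (t 3 : ℤ) ∨ s3 = -(t 3 : ℤ) := by
    clear i12 i13 i23 m1 m2 hR; omega
  clear m1 m2 m3 nz1 nz2 nz3
  rcases e1 with rfl | rfl | rfl | rfl | rfl | rfl <;>
    rcases e2 with rfl | rfl | rfl | rfl | rfl | rfl <;>
      rcases e3 with rfl | rfl | rfl | rfl | rfl | rfl <;>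
        omega

set_option maxHeartbeats 1000000 in
lemma arith_bwd (n : ℕ) (t : ℕ → ℕ)
    (hpos : 0 < t 1) (h12 : t 1 < t 2) (h23 : t 2 < t 3) (h3n : t 3 < n)
    (hnc : ¬ (t 2 = 2 * t 1 ∧ t 3 = 3 * t 1))
    (hR : ¬ (n ≤ t 2 + t 3 ∧
        (t 1 + t 2 = t 3 ∨
         (t 2 = 2 * t 1 ∧ (t 3 = 4 * t 1 ∨ n ≤ t 1 + t 3)) ∨
         (t 3 = 2 * t 1 ∧ n ≤ min (2 * t 2) (3 * t 1))))) :
    ∃ a s1 s2 s3 : ℤ,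
        0 ≤ a ∧ a < n ∧ 0 ≤ a + s1 ∧ a + s1 < n ∧ 0 ≤ a + s2 ∧ a + s2 < n ∧
        0 ≤ a + s3 ∧ a + s3 < n ∧
        s1 ≠ 0 ∧ s2 ≠ 0 ∧ s3 ≠ 0 ∧ s1 ≠ s2 ∧ s1 ≠ s3 ∧ s2 ≠ s3 ∧
        (s1.natAbs = t 1 ∨ s1.natAbs = t 2 ∨ s1.natAbs = t 3) ∧
        (s2.natAbs = t 1 ∨ s2.natAbs = t 2 ∨ s2.natAbs = t 3) ∧
        (s3.natAbs = t 1 ∨ s3.natAbs = t 2 ∨ s3.natAbs = t 3) ∧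
        ¬((s1 - s2).natAbs = t 1 ∨ (s1 - s2).natAbs = t 2 ∨ (s1 - s2).natAbs = t 3) ∧
        ¬((s1 - s3).natAbs = t 1 ∨ (s1 - s3).natAbs = t 2 ∨ (s1 - s3).natAbs = t 3) ∧
        ¬((s2 - s3).natAbs = t 1 ∨ (s2 - s3).natAbs = t 2 ∨ (s2 - s3).natAbs = t 3) := by
  rcases Nat.lt_or_ge (t 2 + t 3) n with hn | hn
  · by_cases h21 : t 2 = 2 * t 1
    · by_cases h34 : t 3 = 4 * t 1
      · refine ⟨(t 2 : ℤ), -(t 2 : ℤ), (t 1 : ℤ), (t 3 : ℤ), ?_⟩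
        and_intros <;> omega
      · refine ⟨(t 1 : ℤ), -(t 1 : ℤ), (t 2 : ℤ), (t 3 : ℤ), ?_⟩
        and_intros <;> omega
    · refine ⟨(t 3 : ℤ), -(t 3 : ℤ), (t 1 : ℤ), (t 2 : ℤ), ?_⟩
      and_intros <;> omega
  · have hABC : ¬ (t 1 + t 2 = t 3 ∨
         (t 2 = 2 * t 1 ∧ (t 3 = 4 * t 1 ∨ n ≤ t 1 + t 3)) ∨
         (t 3 = 2 * t 1 ∧ n ≤ min (2 * t 2) (3 * t 1))) := fun h => hR ⟨hn, h⟩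
    clear hR
    by_cases h21 : t 2 = 2 * t 1
    · refine ⟨(t 1 : ℤ), -(t 1 : ℤ), (t 2 : ℤ), (t 3 : ℤ), ?_⟩
      and_intros <;> omega
    · by_cases h31 : t 3 = 2 * t 1
      · by_cases hn2 : 2 * t 2 < n
        · refine ⟨(t 2 : ℤ), -(t 2 : ℤ), (t 1 : ℤ), (t 2 : ℤ), ?_⟩
          and_intros <;> omega
        · refine ⟨(t 1 : ℤ), -(t 1 : ℤ), (t 2 : ℤ), (t 3 : ℤ), ?_⟩
          and_intros <;> omega
      · by_cases h32 : t 3 = 2 * t 2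
        · refine ⟨(t 1 : ℤ), -(t 1 : ℤ), (t 1 : ℤ), (t 2 : ℤ), ?_⟩
          and_intros <;> omega
        · refine ⟨0, (t 1 : ℤ), (t 2 : ℤ), (t 3 : ℤ), ?_⟩
          and_intros <;> omega

/-- Characterization of claw-free `T_n⟨t 1, t 2, t 3⟩` that are not
cocooneries. -/
theorem stmt_13 (n : ℕ) (t : ℕ → ℕ)
    (hpos : 0 < t 1) (h12 : t 1 < t 2) (h23 : t 2 < t 3) (h3n : t 3 < n)
    (hnc : ¬ (t 2 = 2 * t 1 ∧ t 3 = 3 * t 1)) :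
    ClawFree (toeplitzGraph n 3 t) ↔
      (n ≤ t 2 + t 3 ∧
        (t 1 + t 2 = t 3 ∨
         (t 2 = 2 * t 1 ∧ (t 3 = 4 * t 1 ∨ n ≤ t 1 + t 3)) ∨
         (t 3 = 2 * t 1 ∧ n ≤ min (2 * t 2) (3 * t 1)))) := by
  have key : HasClaw (toeplitzGraph n 3 t) ↔
      ¬ (n ≤ t 2 + t 3 ∧
        (t 1 + t 2 = t 3 ∨
         (t 2 = 2 * t 1 ∧ (t 3 = 4 * t 1 ∨ n ≤ t 1 + t 3)) ∨
         (t 3 = 2 * t 1 ∧ n ≤ min (2 * t 2) (3 * t 1)))) := by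
    rw [claw_iff]
    constructor
    · rintro ⟨a, s1, s2, s3, h1, h2, h3, h4, h5, h6, h7, h8, nz1, nz2, nz3,
        ne12, ne13, ne23, m1, m2, m3, i12, i13, i23⟩ hR
      exact arith_fwd n t hpos h12 h23 h3n a s1 s2 s3 h1 h2 h3 h4 h5 h6 h7 h8
        nz1 nz2 nz3 ne12 ne13 ne23 m1 m2 m3 i12 i13 i23 hR
    · exact arith_bwd n t hpos h12 h23 h3n hnc
  unfold ClawFree
  rw [key, not_not]
end
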